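/- (Composition–Diamond lemma, (iii) ⇒ (i)): Let S ⊂ D(X) be monic. If Irr(S) is a k-linear basis of D(X)/Id(S), then S is a Gröbner–Shirshov basis: every composition (f,g)_w of elements of S is trivial modulo (S, w). -/

import Mathlib

set_option linter.unusedSectionVars false


/-- A letter `D^ī(x)` of the free differential algebra: the word `ī` of operator
indices together with the generator `x`. -/
abbrev Letter (J X : Type*) := List J × X

variable {k J X : Type*} [CommRing k]

/-- The monomial of `D(X) = k⟨(D^ω(X))^*⟩` corresponding to a word `u ∈ T`. -/
noncomputable def monoW (u : List (Letter J X)) : MonoidAlgebra k (FreeMonoid (Letter J X)) :=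
  MonoidAlgebra.single (FreeMonoid.ofList u) 1

/-- Action of the derivation `D_j` on a word, defined by the Leibniz rule. -/
noncomputable def derivMon (j : J) : List (Letter J X) → MonoidAlgebra k (FreeMonoid (Letter J X))
  | [] => 0
  | (a, x) :: v =>
      monoW ((j :: a, x) :: v) + monoW [(a, x)] * derivMon j v

/-- The derivation `D_j` on the free differential algebra `D(X)`. -/
noncomputable def Dop (j : J) :
    MonoidAlgebra k (FreeMonoid (Letter J X)) →ₗ[k] MonoidAlgebra k (FreeMonoid (Letter J X)) :=
  (Finsupp.lsum k fun (u : FreeMonoid (Letter J X)) =>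
    LinearMap.toSpanSingleton k (MonoidAlgebra k (FreeMonoid (Letter J X))) (derivMon j u.toList))
    ∘ₗ (MonoidAlgebra.coeffLinearEquiv k).toLinearMap

/-- The composite operator `D^j̄ = D_{j₁} ∘ ⋯ ∘ D_{jₙ}`. -/
noncomputable def Dops (jb : List J) :
    MonoidAlgebra k (FreeMonoid (Letter J X)) →ₗ[k] MonoidAlgebra k (FreeMonoid (Letter J X)) :=
  jb.foldr (fun j m => (Dop j).comp m) LinearMap.id

/-- `d^j̄(u)`: prepend the operator word `j̄` to the first letter of `u`. -/
def dHat (jb : List J) : List (Letter J X) → List (Letter J X)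
  | [] => []
  | (a, x) :: v => (jb ++ a, x) :: v

/-- Coefficient of the word `u` in `f ∈ D(X)`. -/
noncomputable def coeffW (f : MonoidAlgebra k (FreeMonoid (Letter J X)))
    (u : List (Letter J X)) : k := f.coeff (FreeMonoid.ofList u)

section Order
variable [LinearOrder J] [LinearOrder X]

/-- The order on letters: compare `wt(D^ī(x)) = (x; m, i₁, …, i_m)` lexicographically. -/
def LetterLt (a b : Letter J X) : Prop :=
  a.2 < b.2 ∨ (a.2 = b.2 ∧ (a.1.length < b.1.length ∨
    (a.1.length = b.1.length ∧ List.Lex (· < ·) a.1 b.1)))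

/-- The deg-lex order on words: first by length, then lexicographically. -/
def DegLexLt (u v : List (Letter J X)) : Prop :=
  u.length < v.length ∨ (u.length = v.length ∧ List.Lex LetterLt u v)

/-- `u` is the leading term of `f`. -/
def IsLT (f : MonoidAlgebra k (FreeMonoid (Letter J X))) (u : List (Letter J X)) : Prop :=
  coeffW f u ≠ 0 ∧ ∀ v, coeffW f v ≠ 0 → v ≠ u → DegLexLt v u

/-- `f` is monic with leading term `u`. -/
def MonicW (f : MonoidAlgebra k (FreeMonoid (Letter J X))) (u : List (Letter J X)) : Prop :=
  IsLT f u ∧ coeffW f u = 1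

end Order

/-- Membership in the `D`-ideal generated by `S`. -/
inductive InDIdeal (S : Set (MonoidAlgebra k (FreeMonoid (Letter J X)))) :
    MonoidAlgebra k (FreeMonoid (Letter J X)) → Prop
  | of : ∀ s ∈ S, InDIdeal S s
  | zero : InDIdeal S 0
  | add : ∀ {a b}, InDIdeal S a → InDIdeal S b → InDIdeal S (a + b)
  | smul : ∀ (c : k) {a}, InDIdeal S a → InDIdeal S (c • a)
  | mul_left : ∀ (g) {a}, InDIdeal S a → InDIdeal S (g * a)
  | mul_right : ∀ (g) {a}, InDIdeal S a → InDIdeal S (a * g)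
  | deriv : ∀ (j : J) {a}, InDIdeal S a → InDIdeal S (Dop j a)

/-- `(S,𝒟)`-words: `a · D^j̄(s) · b` with `s ∈ S`. -/
def IsSDWord (S : Set (MonoidAlgebra k (FreeMonoid (Letter J X))))
    (g : MonoidAlgebra k (FreeMonoid (Letter J X))) : Prop :=
  ∃ (a b : List (Letter J X)) (jb : List J), ∃ s ∈ S, g = monoW a * Dops jb s * monoW b

section Order2
variable [LinearOrder J] [LinearOrder X]

/-- `f ≡ 0 mod (S, w)`: `f` is a linear combination of `(S,𝒟)`-words with leading term `< w`. -/
def TrivMod (S : Set (MonoidAlgebra k (FreeMonoid (Letter J X))))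
    (w : List (Letter J X)) (f : MonoidAlgebra k (FreeMonoid (Letter J X))) : Prop :=
  f ∈ Submodule.span k {g | IsSDWord S g ∧ ∃ l, IsLT g l ∧ DegLexLt l w}

/-- `S` is a Gröbner–Shirshov basis: all compositions of elements of `S` are trivial. -/
def IsGSB (S : Set (MonoidAlgebra k (FreeMonoid (Letter J X)))) : Prop :=
  ∀ f ∈ S, ∀ g ∈ S, ∀ fb gb, MonicW f fb → MonicW g gb →
    (∀ a b jb, gb ≠ [] → fb = a ++ dHat jb gb ++ b →
        TrivMod S fb (f - monoW a * Dops jb g * monoW b)) ∧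
    (∀ ib b, fb ≠ [] → dHat ib fb = gb ++ b →
        TrivMod S (dHat ib fb) (Dops ib f - g * monoW b)) ∧
    (∀ a b jb, a ≠ [] → b ≠ [] → fb ≠ [] → gb ≠ [] →
        fb ++ b = a ++ dHat jb gb → (fb ++ b).length < fb.length + gb.length →
        TrivMod S (fb ++ b) (f * monoW b - monoW a * Dops jb g))

/-- `Irr(S)`: words containing no subword `d^ī(s̄)` with `s ∈ S`. -/
def Irr (S : Set (MonoidAlgebra k (FreeMonoid (Letter J X)))) : Set (List (Letter J X)) :=
  {u | ¬ ∃ (a b : List (Letter J X)) (ib : List J), ∃ s ∈ S, ∃ sb, IsLT s sb ∧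
        u = a ++ dHat ib sb ++ b}

end Order2

/-- The `D`-ideal generated by `S`, as a `k`-submodule of `D(X)`. -/
noncomputable def DIdealSub (S : Set (MonoidAlgebra k (FreeMonoid (Letter J X)))) :
    Submodule k (MonoidAlgebra k (FreeMonoid (Letter J X))) where
  carrier := {f | InDIdeal S f}
  add_mem' := fun h1 h2 => InDIdeal.add h1 h2
  zero_mem' := InDIdeal.zero
  smul_mem' := fun c _ h => InDIdeal.smul c h


section ShortLexWF
variable {α : Type*} {r : α → α → Prop}

/-- Short-lex order on lists. -/
def SLexCD (r : α → α → Prop) (u v : List α) : Prop :=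
  u.length < v.length ∨ (u.length = v.length ∧ List.Lex r u v)

private theorem lexFixed_wf (h : WellFounded r) :
    ∀ n, WellFounded (fun u v : {l : List α // l.length = n} => List.Lex r u.1 v.1) := by
  intro n
  induction n with
  | zero =>
    constructor
    rintro ⟨l, hl⟩
    constructor
    rintro ⟨m, hm⟩ hlex
    exfalso
    obtain rfl := List.length_eq_zero_iff.mp hm
    obtain rfl := List.length_eq_zero_iff.mp hl
    cases hlex
  | succ n ih =>
    have hwf := h.prod_lex ih
    let φ : {l : List α // l.length = n + 1} → α × {l : List α // l.length = n} :=
      fun l => (l.1.head (List.ne_nil_of_length_pos (by rw [l.2]; exact Nat.succ_pos n)),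
        ⟨l.1.tail, by rw [List.length_tail, l.2]; rfl⟩)
    refine Subrelation.wf (r := InvImage _ φ) ?_ (InvImage.wf φ hwf)
    rintro ⟨u, hu⟩ ⟨v, hv⟩ hlex
    rcases u with _ | ⟨a, u'⟩
    · simp at hu
    rcases v with _ | ⟨b, v'⟩
    · simp at hv
    cases hlex with
    | rel hab => exact Prod.Lex.left _ _ hab
    | cons hlex' => exact Prod.Lex.right _ hlex'

theorem SLexCD.wf (h : WellFounded r) : WellFounded (SLexCD r) := by
  have key : ∀ n (l : List α), l.length = n → Acc (SLexCD r) l := by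
    intro n
    induction n using Nat.strong_induction_on with
    | _ n ih =>
      have H : ∀ ls : {l : List α // l.length = n}, Acc (SLexCD r) ls.1 := by
        intro ls
        refine (lexFixed_wf h n).induction (C := fun ls => Acc (SLexCD r) ls.1) ls ?_
        intro ls ih2
        constructor
        intro y hy
        rcases hy with hlen | ⟨hlen, hlex⟩
        · exact ih y.length (by rw [← ls.2]; exact hlen) y rfl
        · exact ih2 ⟨y, hlen.trans ls.2⟩ hlex
      exact fun l hl => H ⟨l, hl⟩
  exact ⟨fun l => key l.length l rfl⟩

theorem lex_cons_inv {a b : α} {l m : List α} :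
    List.Lex r (a :: l) (b :: m) ↔ r a b ∨ (a = b ∧ List.Lex r l m) := by
  constructor
  · intro h
    cases h with
    | rel h => exact Or.inl h
    | cons h => exact Or.inr ⟨rfl, h⟩
  · rintro (h | ⟨rfl, h⟩)
    exacts [List.Lex.rel h, List.Lex.cons h]

theorem lex_append_right_fix :
    ∀ {u v : List α}, List.Lex r u v → u.length = v.length → ∀ c, List.Lex r (u ++ c) (v ++ c)
  | _, _, List.Lex.nil, hlen, _ => by simp at hlen
  | _, _, List.Lex.rel h, _, _ => List.Lex.rel h
  | _, _, List.Lex.cons h, hlen, c =>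
      List.Lex.cons (lex_append_right_fix h (by simpa using hlen) c)

end ShortLexWF

section OrderEmb
variable [LinearOrder J] [LinearOrder X]

/-- Embedding of letters into a lexicographic product. -/
def embLCD (a : Letter J X) : X ×ₗ (ℕ ×ₗ (List J)) := toLex (a.2, toLex (a.1.length, a.1))

theorem embLCD_inj : Function.Injective (embLCD (J := J) (X := X)) := by
  rintro ⟨a1, a2⟩ ⟨b1, b2⟩ h
  simp only [embLCD, toLex_inj, Prod.mk.injEq] at h
  obtain ⟨h1, h2, h3⟩ := h
  simp_all

theorem letterLt_iff {a b : Letter J X} : LetterLt a b ↔ embLCD a < embLCD b := by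
  simp only [embLCD]
  rw [Prod.Lex.lt_iff, Prod.Lex.lt_iff]
  exact Iff.rfl

theorem lex_map_iff : ∀ u v : List (Letter J X),
    List.Lex LetterLt u v ↔ List.Lex (· < ·) (u.map embLCD) (v.map embLCD) := by
  intro u
  induction u with
  | nil =>
    intro v
    cases v with
    | nil => constructor <;> (intro h; cases h)
    | cons b v =>
      simp only [List.map_nil, List.map_cons]
      exact ⟨fun _ => List.Lex.nil, fun _ => List.Lex.nil⟩
  | cons a u ih =>
    intro v
    cases v with
    | nil => constructor <;> (intro h; cases h)
    | cons b v =>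
      simp only [List.map_cons, lex_cons_inv]
      rw [ih v, letterLt_iff]
      constructor
      · rintro (h | ⟨rfl, h⟩)
        exacts [Or.inl h, Or.inr ⟨rfl, h⟩]
      · rintro (h | ⟨he, h⟩)
        exacts [Or.inl h, Or.inr ⟨embLCD_inj he, h⟩]

/-- Embedding of words into a lexicographic product. -/
def embWCD (u : List (Letter J X)) : ℕ ×ₗ (List (X ×ₗ (ℕ ×ₗ (List J)))) :=
  toLex (u.length, u.map embLCD)

theorem embWCD_inj : Function.Injective (embWCD (J := J) (X := X)) := by
  intro u v h
  simp only [embWCD, toLex_inj, Prod.mk.injEq] at h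
  exact List.map_injective_iff.mpr embLCD_inj h.2

theorem degLexLt_iff {u v : List (Letter J X)} : DegLexLt u v ↔ embWCD u < embWCD v := by
  simp only [embWCD]
  rw [Prod.Lex.lt_iff]
  exact or_congr Iff.rfl (and_congr Iff.rfl (lex_map_iff u v))

theorem dlt_trans {u v w : List (Letter J X)} (h1 : DegLexLt u v) (h2 : DegLexLt v w) :
    DegLexLt u w := degLexLt_iff.mpr ((degLexLt_iff.mp h1).trans (degLexLt_iff.mp h2))

theorem dlt_irrefl (u : List (Letter J X)) : ¬ DegLexLt u u := by
  rw [degLexLt_iff]; exact lt_irrefl _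

theorem dlt_asymm {u v : List (Letter J X)} (h : DegLexLt u v) : ¬ DegLexLt v u := by
  rw [degLexLt_iff] at h ⊢; exact lt_asymm h

/-- Non-strict deg-lex order. -/
def DLeCD (u v : List (Letter J X)) : Prop := DegLexLt u v ∨ u = v

theorem dle_iff {u v : List (Letter J X)} : DLeCD u v ↔ embWCD u ≤ embWCD v := by
  rw [le_iff_lt_or_eq, DLeCD, degLexLt_iff]
  exact or_congr Iff.rfl ⟨fun h => h ▸ rfl, fun h => embWCD_inj h⟩

theorem dlt_of_dle_of_dlt {u v w : List (Letter J X)} (h1 : DLeCD u v) (h2 : DegLexLt v w) :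
    DegLexLt u w := by
  rw [degLexLt_iff] at h2 ⊢; exact lt_of_le_of_lt (dle_iff.mp h1) h2

theorem dlt_of_dlt_of_dle {u v w : List (Letter J X)} (h1 : DegLexLt u v) (h2 : DLeCD v w) :
    DegLexLt u w := by
  rw [degLexLt_iff] at h1 ⊢; exact lt_of_lt_of_le h1 (dle_iff.mp h2)

theorem dle_trans {u v w : List (Letter J X)} (h1 : DLeCD u v) (h2 : DLeCD v w) : DLeCD u w := by
  rw [dle_iff] at h1 h2 ⊢; exact le_trans h1 h2

theorem dlt_wf [IsWellOrder J (· < ·)] [IsWellOrder X (· < ·)] :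
    WellFounded (DegLexLt (J := J) (X := X)) := by
  have hJ : WellFounded ((· < ·) : J → J → Prop) := IsWellFounded.wf
  have hX : WellFounded ((· < ·) : X → X → Prop) := IsWellFounded.wf
  have hL : WellFounded (LetterLt (J := J) (X := X)) := by
    have hwf := hX.prod_lex (SLexCD.wf hJ)
    refine Subrelation.wf (r := InvImage _ (fun a : Letter J X => (a.2, a.1))) ?_
      (InvImage.wf _ hwf)
    rintro ⟨a1, a2⟩ ⟨b1, b2⟩ h
    rcases h with h | ⟨h1, h2⟩
    · exact Prod.Lex.left _ _ h
    · dsimp only at h1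
      subst h1
      exact Prod.Lex.right _ h2
  exact Subrelation.wf (r := SLexCD LetterLt) (fun h => h) (SLexCD.wf hL)

theorem dlt_append_right {u v : List (Letter J X)} (c : List (Letter J X)) (h : DegLexLt u v) :
    DegLexLt (u ++ c) (v ++ c) := by
  rcases h with h | ⟨h1, h2⟩
  · left; simp only [List.length_append]; omega
  · right
    exact ⟨by simp [h1], lex_append_right_fix h2 h1 c⟩

theorem dlt_append_left {u v : List (Letter J X)} (c : List (Letter J X)) (h : DegLexLt u v) :
    DegLexLt (c ++ u) (c ++ v) := by
  rcases h with h | ⟨h1, h2⟩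
  · left; simp only [List.length_append]; omega
  · right; exact ⟨by simp [h1], List.Lex.append_left _ h2 c⟩

theorem dle_append_right {u v : List (Letter J X)} (c : List (Letter J X)) (h : DLeCD u v) :
    DLeCD (u ++ c) (v ++ c) := by
  rcases h with h | rfl
  · exact Or.inl (dlt_append_right c h)
  · exact Or.inr rfl

theorem dle_append_left {u v : List (Letter J X)} (c : List (Letter J X)) (h : DLeCD u v) :
    DLeCD (c ++ u) (c ++ v) := by
  rcases h with h | rfl
  · exact Or.inl (dlt_append_left c h)
  · exact Or.inr rfl

theorem dlt_append_of_dle_of_dlt {a a' b b' : List (Letter J X)} (h1 : DLeCD a a')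
    (h2 : DegLexLt b b') : DegLexLt (a ++ b) (a' ++ b') :=
  dlt_of_dle_of_dlt (dle_append_right b h1) (dlt_append_left a' h2)

theorem dlt_append_of_dlt_of_dle {a a' b b' : List (Letter J X)} (h1 : DegLexLt a a')
    (h2 : DLeCD b b') : DegLexLt (a ++ b) (a' ++ b') :=
  dlt_of_dlt_of_dle (dlt_append_right b h1) (dle_append_left a' h2)

theorem dle_append {a a' b b' : List (Letter J X)} (h1 : DLeCD a a') (h2 : DLeCD b b') :
    DLeCD (a ++ b) (a' ++ b') :=
  dle_trans (dle_append_right b h1) (dle_append_left a' h2)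

end OrderEmb


section DHat
variable [LinearOrder J] [LinearOrder X]

theorem dHat_nil_idx : ∀ u : List (Letter J X), dHat [] u = u
  | [] => rfl
  | (a, x) :: v => by simp [dHat]

theorem length_dHat (jb : List J) : ∀ u : List (Letter J X), (dHat jb u).length = u.length
  | [] => rfl
  | (a, x) :: v => rfl

theorem dHat_dHat (ib jb : List J) : ∀ u : List (Letter J X),
    dHat ib (dHat jb u) = dHat (ib ++ jb) u
  | [] => rfl
  | (a, x) :: v => by simp [dHat]

theorem dHat_ne_nil {u : List (Letter J X)} (h : u ≠ []) (jb : List J) : dHat jb u ≠ [] := by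
  rcases u with _ | ⟨⟨a, x⟩, v⟩
  · exact absurd rfl h
  · simp [dHat]

theorem letterLt_prepend {jb : List J} {a b : Letter J X} (h : LetterLt a b) :
    LetterLt (jb ++ a.1, a.2) (jb ++ b.1, b.2) := by
  rcases h with h | ⟨h1, h2⟩
  · exact Or.inl h
  · refine Or.inr ⟨h1, ?_⟩
    rcases h2 with h2 | ⟨h2, h3⟩
    · left; simpa using h2
    · right; exact ⟨by simp [h2], List.Lex.append_left _ h3 jb⟩

theorem dHat_mono {u v : List (Letter J X)} (jb : List J) (hu : u ≠ []) (hv : v ≠ [])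
    (h : DegLexLt u v) : DegLexLt (dHat jb u) (dHat jb v) := by
  rcases u with _ | ⟨⟨c, x⟩, u'⟩
  · exact absurd rfl hu
  rcases v with _ | ⟨⟨d, y⟩, v'⟩
  · exact absurd rfl hv
  rcases h with h | ⟨h1, h2⟩
  · left; simpa [dHat] using h
  · right
    refine ⟨by simpa [dHat] using h1, ?_⟩
    rcases lex_cons_inv.mp h2 with h | ⟨heq, h⟩
    · exact List.Lex.rel (letterLt_prepend h)
    · obtain ⟨rfl, rfl⟩ : c = d ∧ x = y := by
        injection heq with h1 h2; exact ⟨h1, h2⟩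
      exact List.Lex.cons h

end DHat

section CoeffLemmas

theorem ofList_injCD : Function.Injective (FreeMonoid.ofList (α := Letter J X)) := by
  intro u v h
  rw [← FreeMonoid.toList_ofList (α := Letter J X) u, h, FreeMonoid.toList_ofList]

open Classical in
theorem coeffW_monoW (u v : List (Letter J X)) :
    coeffW (monoW u : MonoidAlgebra k (FreeMonoid (Letter J X))) v
      = if v = u then 1 else 0 := by
  classical
  rw [coeffW, monoW, MonoidAlgebra.single_apply]
  by_cases h : v = u
  · subst h; simp
  · rw [if_neg h, if_neg (fun he => h (ofList_injCD he).symm)]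

theorem monoW_mul_monoW (u v : List (Letter J X)) :
    (monoW u : MonoidAlgebra k (FreeMonoid (Letter J X))) * monoW v = monoW (u ++ v) := by
  rw [monoW, monoW, monoW, MonoidAlgebra.single_mul_single, one_mul,
    FreeMonoid.ofList_append]

theorem coeffW_add (f g : MonoidAlgebra k (FreeMonoid (Letter J X))) (u : List (Letter J X)) :
    coeffW (f + g) u = coeffW f u + coeffW g u := rfl

theorem coeffW_sub (f g : MonoidAlgebra k (FreeMonoid (Letter J X))) (u : List (Letter J X)) :
    coeffW (f - g) u = coeffW f u - coeffW g u := by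
  show (f - g).coeff (FreeMonoid.ofList u) = _
  rw [MonoidAlgebra.coeff_sub, Finsupp.sub_apply]
  rfl

theorem coeffW_smul (c : k) (f : MonoidAlgebra k (FreeMonoid (Letter J X)))
    (u : List (Letter J X)) : coeffW (c • f) u = c * coeffW f u := by
  show (c • f).coeff (FreeMonoid.ofList u) = _
  rw [MonoidAlgebra.coeff_smul, Finsupp.smul_apply, smul_eq_mul]
  rfl

theorem coeffW_zero (u : List (Letter J X)) :
    coeffW (0 : MonoidAlgebra k (FreeMonoid (Letter J X))) u = 0 := rfl

theorem coeffW_mul_ne_zero {f g : MonoidAlgebra k (FreeMonoid (Letter J X))}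
    {t : List (Letter J X)} (h : coeffW (f * g) t ≠ 0) :
    ∃ a b, t = a ++ b ∧ coeffW f a ≠ 0 ∧ coeffW g b ≠ 0 := by
  classical
  have ht : FreeMonoid.ofList t ∈ (f * g).coeff.support := Finsupp.mem_support_iff.mpr h
  have hm := MonoidAlgebra.support_coeff_mul_subset f g ht
  rw [Finset.mem_mul] at hm
  obtain ⟨y, hy, z, hz, hyz⟩ := hm
  refine ⟨y.toList, z.toList, ?_, ?_, ?_⟩
  · have h2 := congrArg FreeMonoid.toList hyz
    rw [FreeMonoid.toList_mul, FreeMonoid.toList_ofList] at h2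
    exact h2.symm
  · rw [coeffW, FreeMonoid.ofList_toList]
    exact Finsupp.mem_support_iff.mp hy
  · rw [coeffW, FreeMonoid.ofList_toList]
    exact Finsupp.mem_support_iff.mp hz

theorem coeffW_add_ne_zero {f g : MonoidAlgebra k (FreeMonoid (Letter J X))}
    {t : List (Letter J X)} (h : coeffW (f + g) t ≠ 0) :
    coeffW f t ≠ 0 ∨ coeffW g t ≠ 0 := by
  by_contra hc
  push_neg at hc
  rw [coeffW_add, hc.1, hc.2, add_zero] at h
  exact h rfl

end CoeffLemmas


section MonicLemmas
variable [LinearOrder J] [LinearOrder X]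

theorem isLT_unique {f : MonoidAlgebra k (FreeMonoid (Letter J X))} {u v : List (Letter J X)}
    (h1 : IsLT f u) (h2 : IsLT f v) : u = v := by
  by_contra hne
  exact dlt_asymm (h2.2 u h1.1 hne) (h1.2 v h2.1 fun he => hne he.symm)

theorem monic_of_decomp [Nontrivial k] {h r : MonoidAlgebra k (FreeMonoid (Letter J X))}
    {w : List (Letter J X)} (he : h = monoW w + r)
    (hr : ∀ t, coeffW r t ≠ 0 → DegLexLt t w) : MonicW h w := by
  have hrw : coeffW r w = 0 := by
    by_contra hc
    exact dlt_irrefl w (hr w hc)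
  have hcw : coeffW h w = 1 := by
    rw [he, coeffW_add, coeffW_monoW, if_pos rfl, hrw, add_zero]
  refine ⟨⟨by rw [hcw]; exact one_ne_zero, ?_⟩, hcw⟩
  intro t ht htne
  rw [he, coeffW_add, coeffW_monoW, if_neg htne, zero_add] at ht
  exact hr t ht

theorem monic_monoW [Nontrivial k] (u : List (Letter J X)) :
    MonicW (monoW u : MonoidAlgebra k (FreeMonoid (Letter J X))) u := by
  refine monic_of_decomp (r := 0) (by rw [add_zero]) ?_
  intro t ht
  exact absurd (coeffW_zero t) ht

theorem monic_bound {f : MonoidAlgebra k (FreeMonoid (Letter J X))} {u : List (Letter J X)}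
    (h : MonicW f u) : ∀ t, coeffW f t ≠ 0 → DLeCD t u := by
  intro t ht
  by_cases he : t = u
  · exact Or.inr he
  · exact Or.inl (h.1.2 t ht he)

theorem monic_decomp {f : MonoidAlgebra k (FreeMonoid (Letter J X))} {u : List (Letter J X)}
    (h : MonicW f u) : ∀ t, coeffW (f - monoW u) t ≠ 0 → DegLexLt t u := by
  intro t ht
  rw [coeffW_sub, coeffW_monoW] at ht
  by_cases he : t = u
  · subst he
    rw [if_pos rfl, h.2, sub_self] at ht
    exact absurd rfl ht
  · rw [if_neg he, sub_zero] at ht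
    exact h.1.2 t ht he

theorem bound_mul_lt_le {f g : MonoidAlgebra k (FreeMonoid (Letter J X))}
    {u v : List (Letter J X)} (hf : ∀ t, coeffW f t ≠ 0 → DegLexLt t u)
    (hg : ∀ t, coeffW g t ≠ 0 → DLeCD t v) :
    ∀ t, coeffW (f * g) t ≠ 0 → DegLexLt t (u ++ v) := by
  intro t ht
  obtain ⟨a, b, rfl, ha, hb⟩ := coeffW_mul_ne_zero ht
  exact dlt_append_of_dlt_of_dle (hf a ha) (hg b hb)

theorem bound_mul_le_lt {f g : MonoidAlgebra k (FreeMonoid (Letter J X))}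
    {u v : List (Letter J X)} (hf : ∀ t, coeffW f t ≠ 0 → DLeCD t u)
    (hg : ∀ t, coeffW g t ≠ 0 → DegLexLt t v) :
    ∀ t, coeffW (f * g) t ≠ 0 → DegLexLt t (u ++ v) := by
  intro t ht
  obtain ⟨a, b, rfl, ha, hb⟩ := coeffW_mul_ne_zero ht
  exact dlt_append_of_dle_of_dlt (hf a ha) (hg b hb)

theorem monic_mul [Nontrivial k] {f g : MonoidAlgebra k (FreeMonoid (Letter J X))}
    {u v : List (Letter J X)} (hf : MonicW f u) (hg : MonicW g v) :
    MonicW (f * g) (u ++ v) := by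
  have he : f * g = monoW (u ++ v) + (monoW u * (g - monoW v) + (f - monoW u) * g) := by
    rw [← monoW_mul_monoW, mul_sub, sub_mul]
    abel
  refine monic_of_decomp he ?_
  intro t ht
  rcases coeffW_add_ne_zero ht with h1 | h1
  · exact bound_mul_le_lt (monic_bound (monic_monoW u)) (monic_decomp hg) t h1
  · exact bound_mul_lt_le (monic_decomp hf) (monic_bound hg) t h1

theorem monic_sub_bound {h₁ h₂ : MonoidAlgebra k (FreeMonoid (Letter J X))}
    {w : List (Letter J X)} (hm1 : MonicW h₁ w) (hm2 : MonicW h₂ w) :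
    ∀ t, coeffW (h₁ - h₂) t ≠ 0 → DegLexLt t w := by
  intro t ht
  rw [coeffW_sub] at ht
  by_cases he : t = w
  · subst he
    rw [hm1.2, hm2.2, sub_self] at ht
    exact absurd rfl ht
  · have : coeffW h₁ t ≠ 0 ∨ coeffW h₂ t ≠ 0 := by
      by_contra hc
      push_neg at hc
      rw [hc.1, hc.2, sub_self] at ht
      exact ht rfl
    rcases this with h1 | h1
    · exact hm1.1.2 t h1 he
    · exact hm2.1.2 t h1 he

theorem exists_max_word {f : MonoidAlgebra k (FreeMonoid (Letter J X))} (hf : f ≠ 0) :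
    ∃ m, coeffW f m ≠ 0 ∧ ∀ t, coeffW f t ≠ 0 → DLeCD t m := by
  have hs : f.coeff.support.Nonempty :=
    Finsupp.support_nonempty_iff.mpr (fun h => hf (MonoidAlgebra.coeff_eq_zero.mp h))
  obtain ⟨x, hx, hmax⟩ := Finset.exists_max_image f.coeff.support (fun w => embWCD w.toList) hs
  refine ⟨x.toList, ?_, ?_⟩
  · rw [coeffW, FreeMonoid.ofList_toList]
    exact Finsupp.mem_support_iff.mp hx
  · intro t ht
    have hmem : FreeMonoid.ofList t ∈ f.coeff.support := Finsupp.mem_support_iff.mpr ht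
    have hle := hmax _ hmem
    rw [FreeMonoid.toList_ofList] at hle
    exact dle_iff.mpr hle

end MonicLemmas


section DerivLemmas
variable [LinearOrder J] [LinearOrder X]

theorem derivMon_nil (j : J) :
    (derivMon j ([] : List (Letter J X)) : MonoidAlgebra k (FreeMonoid (Letter J X))) = 0 := rfl

theorem derivMon_cons (j : J) (c : List J) (x : X) (v : List (Letter J X)) :
    (derivMon j ((c, x) :: v) : MonoidAlgebra k (FreeMonoid (Letter J X)))
      = monoW ((j :: c, x) :: v) + monoW [(c, x)] * derivMon j v := rfl

theorem monic_derivMon [Nontrivial k] (j : J) :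
    ∀ u : List (Letter J X), u ≠ [] →
      MonicW (derivMon j u : MonoidAlgebra k (FreeMonoid (Letter J X))) (dHat [j] u) := by
  intro u
  induction u with
  | nil => intro h; exact absurd rfl h
  | cons a v ih =>
    rcases a with ⟨c, x⟩
    intro _
    show MonicW _ ((j :: c, x) :: v)
    refine monic_of_decomp (derivMon_cons j c x v) ?_
    intro t ht
    by_cases hv : v = []
    · subst hv
      rw [derivMon_nil, mul_zero] at ht
      exact absurd (coeffW_zero t) ht
    · obtain ⟨p, q, rfl, hp, hq⟩ := coeffW_mul_ne_zero ht
      rw [coeffW_monoW] at hp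
      by_cases hpe : p = [(c, x)]
      · subst hpe
        have hm := ih hv
        have hq' : DLeCD q (dHat [j] v) := monic_bound hm q hq
        have h1 : DLeCD ((c, x) :: q) ((c, x) :: dHat [j] v) := dle_append_left [(c, x)] hq'
        have h2 : DegLexLt ((c, x) :: dHat [j] v) ((j :: c, x) :: v) := by
          right
          refine ⟨by simp [length_dHat], List.Lex.rel ?_⟩
          exact Or.inr ⟨rfl, Or.inl (by simp)⟩
        exact dlt_of_dle_of_dlt h1 h2
      · rw [if_neg hpe] at hp
        exact absurd rfl hp

theorem Dop_apply_eq (j : J) (f : MonoidAlgebra k (FreeMonoid (Letter J X))) :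
    Dop j f = f.coeff.sum fun w c => c • derivMon j w.toList := by
  rfl

theorem coeffW_Dop (j : J) (f : MonoidAlgebra k (FreeMonoid (Letter J X)))
    (t : List (Letter J X)) :
    coeffW (Dop j f) t = f.coeff.sum fun w c => c * coeffW (derivMon j w.toList) t := by
  rw [Dop_apply_eq, coeffW, MonoidAlgebra.coeff_finsuppSum, Finsupp.sum_apply]
  exact Finsupp.sum_congr fun w c => by
    rw [MonoidAlgebra.coeff_smul, Finsupp.smul_apply, smul_eq_mul]; rfl

theorem Dop_monoW (j : J) (u : List (Letter J X)) :
    Dop j (monoW u : MonoidAlgebra k (FreeMonoid (Letter J X))) = derivMon j u := by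
  rw [Dop_apply_eq, monoW, MonoidAlgebra.coeff_single, Finsupp.sum_single_index (by rw [zero_smul]), one_smul,
    FreeMonoid.toList_ofList]

theorem Dop_bound [Nontrivial k] {g : MonoidAlgebra k (FreeMonoid (Letter J X))}
    {u : List (Letter J X)} (j : J) (hu : u ≠ [])
    (hg : ∀ t, coeffW g t ≠ 0 → DegLexLt t u) :
    ∀ t, coeffW (Dop j g) t ≠ 0 → DegLexLt t (dHat [j] u) := by
  intro t ht
  rw [coeffW_Dop, Finsupp.sum] at ht
  obtain ⟨w, hw, hne⟩ := Finset.exists_ne_zero_of_sum_ne_zero ht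
  have hgw : coeffW g w.toList ≠ 0 := by
    rw [coeffW, FreeMonoid.ofList_toList]
    exact Finsupp.mem_support_iff.mp hw
  have hlt := hg _ hgw
  have hdc : coeffW (derivMon j w.toList : MonoidAlgebra k (FreeMonoid (Letter J X))) t ≠ 0 := by
    intro h0
    rw [h0, mul_zero] at hne
    exact hne rfl
  have hwnil : w.toList ≠ [] := by
    intro hnil
    rw [hnil, derivMon_nil] at hdc
    exact hdc (coeffW_zero t)
  have hmono := monic_derivMon (k := k) j w.toList hwnil
  exact dlt_of_dle_of_dlt (monic_bound hmono t hdc) (dHat_mono [j] hwnil hu hlt)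

theorem monic_Dop [Nontrivial k] {f : MonoidAlgebra k (FreeMonoid (Letter J X))}
    {u : List (Letter J X)} (j : J) (hf : MonicW f u) (hu : u ≠ []) :
    MonicW (Dop j f) (dHat [j] u) := by
  have hm := monic_derivMon (k := k) j u hu
  have he : Dop j f = monoW (dHat [j] u)
      + ((derivMon j u - monoW (dHat [j] u)) + Dop j (f - monoW u)) := by
    rw [map_sub, Dop_monoW]
    abel
  refine monic_of_decomp he ?_
  intro t ht
  rcases coeffW_add_ne_zero ht with h1 | h1
  · exact monic_decomp hm t h1
  · exact Dop_bound j hu (monic_decomp hf) t h1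

theorem Dops_nil_apply (f : MonoidAlgebra k (FreeMonoid (Letter J X))) :
    Dops ([] : List J) f = f := rfl

theorem Dops_cons_apply (j : J) (jb : List J) (f : MonoidAlgebra k (FreeMonoid (Letter J X))) :
    Dops (j :: jb) f = Dop j (Dops jb f) := rfl

theorem monic_Dops [Nontrivial k] {f : MonoidAlgebra k (FreeMonoid (Letter J X))}
    {u : List (Letter J X)} (jb : List J) (hf : MonicW f u) (hu : u ≠ []) :
    MonicW (Dops jb f) (dHat jb u) := by
  induction jb with
  | nil =>
    rw [Dops_nil_apply, dHat_nil_idx]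
    exact hf
  | cons j jb ih =>
    rw [Dops_cons_apply]
    have := monic_Dop j ih (dHat_ne_nil hu jb)
    rwa [dHat_dHat] at this

end DerivLemmas


section MainArg
variable [LinearOrder J] [LinearOrder X]

noncomputable def SDLtMod (S : Set (MonoidAlgebra k (FreeMonoid (Letter J X))))
    (w : List (Letter J X)) : Submodule k (MonoidAlgebra k (FreeMonoid (Letter J X))) :=
  Submodule.span k {g | IsSDWord S g ∧ ∃ l, IsLT g l ∧ DegLexLt l w}

noncomputable def IrrLtMod (S : Set (MonoidAlgebra k (FreeMonoid (Letter J X))))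
    (w : List (Letter J X)) : Submodule k (MonoidAlgebra k (FreeMonoid (Letter J X))) :=
  Submodule.span k {p | ∃ v, v ∈ Irr S ∧ DegLexLt v w ∧ p = monoW v}

theorem sdLt_mono {S : Set (MonoidAlgebra k (FreeMonoid (Letter J X)))}
    {w w' : List (Letter J X)} (h : DegLexLt w w') : SDLtMod S w ≤ SDLtMod S w' :=
  Submodule.span_mono (by
    rintro g ⟨hsd, l, hl, hlt⟩
    exact ⟨hsd, l, hl, dlt_trans hlt h⟩)

theorem irrLt_mono {S : Set (MonoidAlgebra k (FreeMonoid (Letter J X)))}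
    {w w' : List (Letter J X)} (h : DegLexLt w w') : IrrLtMod S w ≤ IrrLtMod S w' :=
  Submodule.span_mono (by
    rintro p ⟨v, hv, hlt, rfl⟩
    exact ⟨v, hv, dlt_trans hlt h, rfl⟩)

theorem mem_DIdealSub {S : Set (MonoidAlgebra k (FreeMonoid (Letter J X)))}
    {f : MonoidAlgebra k (FreeMonoid (Letter J X))} : f ∈ DIdealSub S ↔ InDIdeal S f :=
  Iff.rfl

theorem sub_mem_ideal {S : Set (MonoidAlgebra k (FreeMonoid (Letter J X)))}
    {p q : MonoidAlgebra k (FreeMonoid (Letter J X))} (hp : InDIdeal S p) (hq : InDIdeal S q) :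
    InDIdeal S (p - q) :=
  mem_DIdealSub.mp (Submodule.sub_mem (DIdealSub S) (mem_DIdealSub.mpr hp) (mem_DIdealSub.mpr hq))

theorem dops_mem {S : Set (MonoidAlgebra k (FreeMonoid (Letter J X)))}
    {a : MonoidAlgebra k (FreeMonoid (Letter J X))} (jb : List J) (ha : InDIdeal S a) :
    InDIdeal S (Dops jb a) := by
  induction jb with
  | nil => exact ha
  | cons j jb ih => exact InDIdeal.deriv j ih

theorem sd_mem {S : Set (MonoidAlgebra k (FreeMonoid (Letter J X)))}
    {g : MonoidAlgebra k (FreeMonoid (Letter J X))} (hg : IsSDWord S g) : InDIdeal S g := by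
  obtain ⟨a, b, jb, s, hs, rfl⟩ := hg
  exact InDIdeal.mul_right _ (InDIdeal.mul_left _ (dops_mem jb (InDIdeal.of s hs)))

theorem sdLt_le_ideal {S : Set (MonoidAlgebra k (FreeMonoid (Letter J X)))}
    {w : List (Letter J X)} : SDLtMod S w ≤ DIdealSub S :=
  Submodule.span_le.mpr fun g hg => mem_DIdealSub.mpr (sd_mem hg.1)

theorem main_red [IsWellOrder J (· < ·)] [IsWellOrder X (· < ·)] [Nontrivial k]
    (S : Set (MonoidAlgebra k (FreeMonoid (Letter J X))))
    (hS : ∀ s ∈ S, ∃ sb, MonicW s sb) :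
    ∀ (u : List (Letter J X)) (h : MonoidAlgebra k (FreeMonoid (Letter J X))),
      (∀ t, coeffW h t ≠ 0 → DegLexLt t u) →
      ∃ q ∈ IrrLtMod S u, h - q ∈ SDLtMod S u := by
  intro u
  refine (dlt_wf (J := J) (X := X)).induction
    (C := fun u => ∀ h : MonoidAlgebra k (FreeMonoid (Letter J X)),
      (∀ t, coeffW h t ≠ 0 → DegLexLt t u) → ∃ q ∈ IrrLtMod S u, h - q ∈ SDLtMod S u) u ?_
  clear u
  intro u IH h hh
  by_cases h0 : h = 0
  · exact ⟨0, Submodule.zero_mem _, by rw [h0, sub_zero]; exact Submodule.zero_mem _⟩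
  obtain ⟨m, hm, hmax⟩ := exists_max_word h0
  have hmu : DegLexLt m u := hh m hm
  set c := coeffW h m with hc
  by_cases hirr : m ∈ Irr S
  · set h' := h - c • monoW m with hh'
    have hb' : ∀ t, coeffW h' t ≠ 0 → DegLexLt t m := by
      intro t ht
      rw [hh', coeffW_sub, coeffW_smul, coeffW_monoW] at ht
      by_cases he : t = m
      · subst he
        rw [if_pos rfl, mul_one, ← hc, sub_self] at ht
        exact absurd rfl ht
      · rw [if_neg he, mul_zero, sub_zero] at ht
        rcases hmax t ht with hlt | heq
        · exact hlt
        · exact absurd heq he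
    obtain ⟨q', hq1, hq2⟩ := IH m hmu h' hb'
    refine ⟨c • monoW m + q', ?_, ?_⟩
    · exact Submodule.add_mem _
        (Submodule.smul_mem _ c (Submodule.subset_span ⟨m, hirr, hmu, rfl⟩))
        (irrLt_mono hmu hq1)
    · have heq : h - (c • monoW m + q') = h' - q' := by rw [hh']; abel
      rw [heq]
      exact sdLt_mono hmu hq2
  · simp only [Irr, Set.mem_setOf_eq, not_not] at hirr
    obtain ⟨a, b, ib, s, hsS, sb, hslt, hmeq⟩ := hirr
    obtain ⟨sb', hsm⟩ := hS s hsS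
    obtain rfl : sb' = sb := isLT_unique hsm.1 hslt
    have hg₀ : ∃ g₀, IsSDWord S g₀ ∧ MonicW g₀ m := by
      by_cases hnil : sb' = []
      · subst hnil
        have hs1 : s = monoW [] := by
          refine MonoidAlgebra.coeff_injective (Finsupp.ext fun x => ?_)
          have hx : x = FreeMonoid.ofList x.toList := (FreeMonoid.ofList_toList x).symm
          rw [hx]
          show coeffW s x.toList = coeffW (monoW []) x.toList
          rw [coeffW_monoW]
          by_cases hxe : x.toList = []
          · rw [if_pos hxe, hxe]
            exact hsm.2
          · rw [if_neg hxe]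
            by_contra hcne
            rcases hsm.1.2 x.toList hcne hxe with hlen | ⟨hlen, _⟩
            · simp at hlen
            · exact hxe (List.length_eq_zero_iff.mp hlen)
        refine ⟨monoW m, ⟨m, [], [], s, hsS, ?_⟩, monic_monoW m⟩
        rw [hs1, Dops_nil_apply, monoW_mul_monoW, monoW_mul_monoW]
        simp
      · refine ⟨monoW a * Dops ib s * monoW b, ⟨a, b, ib, s, hsS, rfl⟩, ?_⟩
        rw [hmeq]
        exact monic_mul (monic_mul (monic_monoW a) (monic_Dops ib hsm hnil)) (monic_monoW b)
    obtain ⟨g₀, hgsd, hgm⟩ := hg₀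
    set h' := h - c • g₀ with hh'
    have hb' : ∀ t, coeffW h' t ≠ 0 → DegLexLt t m := by
      intro t ht
      rw [hh', coeffW_sub, coeffW_smul] at ht
      by_cases he : t = m
      · subst he
        rw [hgm.2, mul_one, ← hc, sub_self] at ht
        exact absurd rfl ht
      · have hone : coeffW h t ≠ 0 ∨ coeffW g₀ t ≠ 0 := by
          by_contra hcon
          push_neg at hcon
          rw [hcon.1, hcon.2, mul_zero, sub_zero] at ht
          exact ht rfl
        rcases hone with h1 | h1
        · rcases hmax t h1 with hlt | heq
          · exact hlt
          · exact absurd heq he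
        · exact hgm.1.2 t h1 he
    obtain ⟨q', hq1, hq2⟩ := IH m hmu h' hb'
    refine ⟨q', irrLt_mono hmu hq1, ?_⟩
    have heq : h - q' = (h' - q') + c • g₀ := by rw [hh']; abel
    rw [heq]
    exact Submodule.add_mem _ (sdLt_mono hmu hq2)
      (Submodule.smul_mem _ c (Submodule.subset_span ⟨hgsd, m, hgm.1, hmu⟩))

theorem irr_zero (S : Set (MonoidAlgebra k (FreeMonoid (Letter J X))))
    (hind : LinearIndependent k (fun u : Irr S =>
      Submodule.Quotient.mk (p := DIdealSub S) (monoW u.1)))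
    {q : MonoidAlgebra k (FreeMonoid (Letter J X))}
    (hq : q ∈ Submodule.span k {p | ∃ v, v ∈ Irr S ∧ p = monoW v})
    (hid : InDIdeal S q) : q = 0 := by
  have hset : {p : MonoidAlgebra k (FreeMonoid (Letter J X)) | ∃ v, v ∈ Irr S ∧ p = monoW v}
      = Set.range (fun v : Irr S => (monoW v.1 : MonoidAlgebra k (FreeMonoid (Letter J X)))) := by
    ext p
    constructor
    · rintro ⟨v, hv, rfl⟩
      exact ⟨⟨v, hv⟩, rfl⟩
    · rintro ⟨⟨v, hv⟩, rfl⟩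
      exact ⟨v, hv, rfl⟩
  rw [hset] at hq
  obtain ⟨cc, hcc⟩ := Finsupp.mem_span_range_iff_exists_finsupp.mp hq
  have hlc : Finsupp.linearCombination k (fun v : Irr S =>
      Submodule.Quotient.mk (p := DIdealSub S) (monoW v.1)) cc = 0 := by
    rw [Finsupp.linearCombination_apply]
    have h2 := congrArg (Submodule.mkQ (DIdealSub S)) hcc
    rw [map_finsuppSum] at h2
    simp only [map_smul, Submodule.mkQ_apply] at h2
    rw [h2]
    exact (Submodule.Quotient.mk_eq_zero _).mpr (mem_DIdealSub.mpr hid)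
  have hc0 := linearIndependent_iff.mp hind cc hlc
  rw [hc0] at hcc
  simpa using hcc.symm

theorem key_triv [IsWellOrder J (· < ·)] [IsWellOrder X (· < ·)] [Nontrivial k]
    (S : Set (MonoidAlgebra k (FreeMonoid (Letter J X))))
    (hS : ∀ s ∈ S, ∃ sb, MonicW s sb)
    (hind : LinearIndependent k (fun u : Irr S =>
      Submodule.Quotient.mk (p := DIdealSub S) (monoW u.1)))
    {w : List (Letter J X)} {h : MonoidAlgebra k (FreeMonoid (Letter J X))}
    (hid : InDIdeal S h) (hb : ∀ t, coeffW h t ≠ 0 → DegLexLt t w) : TrivMod S w h := by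
  obtain ⟨q, hq1, hq2⟩ := main_red S hS w h hb
  have hsub : InDIdeal S (h - q) := mem_DIdealSub.mp (sdLt_le_ideal hq2)
  have hqid : InDIdeal S q := by
    have heq : q = h - (h - q) := (sub_sub_cancel h q).symm
    rw [heq]
    exact sub_mem_ideal hid hsub
  have hbig : q ∈ Submodule.span k
      {p : MonoidAlgebra k (FreeMonoid (Letter J X)) | ∃ v, v ∈ Irr S ∧ p = monoW v} := by
    refine Submodule.span_mono ?_ hq1
    rintro p ⟨v, hv, _, rfl⟩
    exact ⟨v, hv, rfl⟩
  have hq0 : q = 0 := irr_zero S hind hbig hqid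
  have : h ∈ SDLtMod S w := by
    rw [hq0, sub_zero] at hq2
    exact hq2
  exact this

end MainArg


/-- Composition–Diamond lemma, (iii) ⇒ (i): if `Irr(S)` is a `k`-linear basis of
`D(X)/Id(S)`, then `S` is a Gröbner–Shirshov basis. -/
theorem stmt15 [LinearOrder J] [LinearOrder X]
    [IsWellOrder J (· < ·)] [IsWellOrder X (· < ·)]
    (S : Set (MonoidAlgebra k (FreeMonoid (Letter J X))))
    (hS : ∀ s ∈ S, ∃ sb, MonicW s sb)
    (hind : LinearIndependent k (fun u : Irr S =>
      Submodule.Quotient.mk (p := DIdealSub S) (monoW u.1)))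
    (hspan : Submodule.span k (Set.range fun u : Irr S =>
      Submodule.Quotient.mk (p := DIdealSub S) (monoW u.1)) = ⊤) :
    IsGSB S := by
  rcases subsingleton_or_nontrivial k with hk | hk
  · intro f hf g hg fb gb hmf hmg
    exact absurd (Subsingleton.elim (coeffW f fb) 0) hmf.1.1
  · intro f hf g hg fb gb hmf hmg
    refine ⟨?_, ?_, ?_⟩
    · intro a b jb hgb hfb
      have hm2 : MonicW (monoW a * Dops jb g * monoW b) fb := by
        rw [hfb]
        exact monic_mul (monic_mul (monic_monoW a) (monic_Dops jb hmg hgb)) (monic_monoW b)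
      refine key_triv S hS hind ?_ (monic_sub_bound hmf hm2)
      exact sub_mem_ideal (InDIdeal.of f hf)
        (InDIdeal.mul_right _ (InDIdeal.mul_left _ (dops_mem jb (InDIdeal.of g hg))))
    · intro ib b hfb heq
      have hm1 : MonicW (Dops ib f) (dHat ib fb) := monic_Dops ib hmf hfb
      have hm2 : MonicW (g * monoW b) (dHat ib fb) := by
        rw [heq]
        exact monic_mul hmg (monic_monoW b)
      refine key_triv S hS hind ?_ (monic_sub_bound hm1 hm2)
      exact sub_mem_ideal (dops_mem ib (InDIdeal.of f hf))
        (InDIdeal.mul_right _ (InDIdeal.of g hg))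
    · intro a b jb ha hb hfb hgb heq hlen
      have hm1 : MonicW (f * monoW b) (fb ++ b) := monic_mul hmf (monic_monoW b)
      have hm2 : MonicW (monoW a * Dops jb g) (fb ++ b) := by
        rw [heq]
        exact monic_mul (monic_monoW a) (monic_Dops jb hmg hgb)
      refine key_triv S hS hind ?_ (monic_sub_bound hm1 hm2)
      exact sub_mem_ideal (InDIdeal.mul_right _ (InDIdeal.of f hf))
        (InDIdeal.mul_left _ (dops_mem jb (InDIdeal.of g hg)))
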